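/- arXiv:1510.06656 — 4 statements merged into one kernel-verified Lean document; each statement's English description precedes it below -/
import Mathlib

section
/- For the drifted Brownian motion model, the function g0 defined piecewise by g0(x) = −(c_b/(2μ))x² − (σ²c_b/(2μ²))x + (σ⁴(c_b+c_h)/(4μ³))(e^{2μx/σ²} − 1) for x < 0 and g0(x) = (c_h/(2μ))x² + (σ²c_h/(2μ²))x for x ≥ 0 is twice continuously differentiable on ℝ and satisfies (σ²/2)g0''(x) − μ g0'(x) = −c0(x), where c0(x) = −c_b x for x < 0 and c0(x) = c_h x for x ≥ 0. -/
/-!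
Each branch of `g0` is smooth on all of `ℝ` and solves the ODE on its own: the quadratic for
`c0 x = c_h x`, the quadratic plus a multiple of `exp (2μx/σ²)` (a solution of the homogeneous
equation) for `c0 x = -c_b x`. The multiple `σ⁴(c_b + c_h)/(4μ³)` is the one for which the two
branches have the same slope at `0`; their second derivatives then agree there too, because the
ODE expresses `g0''` through `g0'` and the continuous `c0`. A function glued from two
differentiable pieces that agree at the junction to first order is differentiable with the glued
derivative, and applying this twice gives `C²`.
-/

open Real Set Filter Topology

section Gluing

variable {f g f' g' f'' g'' : ℝ → ℝ} {a : ℝ}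

theorem hasDerivAt_ite_lt (hf : ∀ x, HasDerivAt f (f' x) x) (hg : ∀ x, HasDerivAt g (g' x) x)
    (h₀ : f a = g a) (h₁ : f' a = g' a) (x : ℝ) :
    HasDerivAt (fun y => if y < a then f y else g y) (if x < a then f' x else g' x) x := by
  set F := fun y => if y < a then f y else g y
  have hleft : EqOn F f (Iic a) := fun y hy => by
    rcases (mem_Iic.1 hy).lt_or_eq with hy | rfl
    · simp [F, hy]
    · simp [F, h₀]
  have hright : EqOn F g (Ici a) := fun y hy => by simp [F, not_lt.2 (mem_Ici.1 hy)]
  rcases lt_trichotomy x a with hx | rfl | hx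
  · simpa [hx] using (hf x).congr_of_eventuallyEq (hleft.eventuallyEq_of_mem (Iic_mem_nhds hx))
  · have h := ((hf x).hasDerivWithinAt.congr hleft (hleft self_mem_Iic)).union
      (h₁ ▸ (hg x).hasDerivWithinAt.congr hright (hright self_mem_Ici))
    simpa [h₁] using h
  · simpa [not_lt.2 hx.le] using
      (hg x).congr_of_eventuallyEq (hright.eventuallyEq_of_mem (Ici_mem_nhds hx))

theorem continuous_ite_lt (hf : Continuous f) (hg : Continuous g) (h₀ : f a = g a) :
    Continuous fun y => if y < a then f y else g y := by
  simp_rw [← not_le, ite_not]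
  exact hg.if_le hf continuous_const continuous_id fun x hx => hx ▸ h₀.symm

theorem contDiff_two_ite_lt (hf : ∀ x, HasDerivAt f (f' x) x) (hg : ∀ x, HasDerivAt g (g' x) x)
    (hf' : ∀ x, HasDerivAt f' (f'' x) x) (hg' : ∀ x, HasDerivAt g' (g'' x) x)
    (hf'' : Continuous f'') (hg'' : Continuous g'')
    (h₀ : f a = g a) (h₁ : f' a = g' a) (h₂ : f'' a = g'' a) :
    ContDiff ℝ 2 fun y => if y < a then f y else g y := by
  have hd₁ := hasDerivAt_ite_lt hf hg h₀ h₁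
  have hd₂ := hasDerivAt_ite_lt hf' hg' h₁ h₂
  rw [show (2 : WithTop ℕ∞) = 1 + 1 from rfl, contDiff_succ_iff_deriv]
  refine ⟨fun x => (hd₁ x).differentiableAt, by simp, ?_⟩
  rw [funext fun x => (hd₁ x).deriv, contDiff_one_iff_deriv, funext fun x => (hd₂ x).deriv]
  exact ⟨fun x => (hd₂ x).differentiableAt, continuous_ite_lt hf'' hg'' h₂⟩

end Gluing

namespace DriftedBrownian

variable (μ σ c_b c_h : ℝ)

noncomputable section

def gNeg (x : ℝ) : ℝ :=
  -(c_b / (2 * μ)) * x ^ 2 - σ ^ 2 * c_b / (2 * μ ^ 2) * x +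
    σ ^ 4 * (c_b + c_h) / (4 * μ ^ 3) * (exp (2 * μ * x / σ ^ 2) - 1)

def gNeg' (x : ℝ) : ℝ :=
  -(c_b / μ) * x - σ ^ 2 * c_b / (2 * μ ^ 2) +
    σ ^ 2 * (c_b + c_h) / (2 * μ ^ 2) * exp (2 * μ * x / σ ^ 2)

def gNeg'' (x : ℝ) : ℝ :=
  -(c_b / μ) + (c_b + c_h) / μ * exp (2 * μ * x / σ ^ 2)

def gPos (x : ℝ) : ℝ := c_h / (2 * μ) * x ^ 2 + σ ^ 2 * c_h / (2 * μ ^ 2) * x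

def gPos' (x : ℝ) : ℝ := c_h / μ * x + σ ^ 2 * c_h / (2 * μ ^ 2)

def gPos'' (_ : ℝ) : ℝ := c_h / μ

end

theorem hasDerivAt_exp_scaled (x : ℝ) :
    HasDerivAt (fun y => exp (2 * μ * y / σ ^ 2)) (exp (2 * μ * x / σ ^ 2) * (2 * μ / σ ^ 2)) x :=
  (by simpa using ((hasDerivAt_id x).const_mul (2 * μ)).div_const (σ ^ 2) :
    HasDerivAt (fun y => 2 * μ * y / σ ^ 2) (2 * μ / σ ^ 2) x).exp

theorem hasDerivAt_gNeg (hμ : μ ≠ 0) (x : ℝ) :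
    HasDerivAt (gNeg μ σ c_b c_h) (gNeg' μ σ c_b c_h x) x := by
  have h := (((hasDerivAt_pow 2 x).const_mul (-(c_b / (2 * μ)))).sub
    ((hasDerivAt_id x).const_mul (σ ^ 2 * c_b / (2 * μ ^ 2)))).add
    (((hasDerivAt_exp_scaled μ σ x).sub_const 1).const_mul (σ ^ 4 * (c_b + c_h) / (4 * μ ^ 3)))
  refine h.congr_deriv ?_
  rw [gNeg']
  field_simp
  ring

theorem hasDerivAt_gNeg' (hμ : μ ≠ 0) (hσ : σ ≠ 0) (x : ℝ) :
    HasDerivAt (gNeg' μ σ c_b c_h) (gNeg'' μ σ c_b c_h x) x := by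
  have h := (((hasDerivAt_id x).const_mul (-(c_b / μ))).sub_const
    (σ ^ 2 * c_b / (2 * μ ^ 2))).add
    ((hasDerivAt_exp_scaled μ σ x).const_mul (σ ^ 2 * (c_b + c_h) / (2 * μ ^ 2)))
  refine h.congr_deriv ?_
  rw [gNeg'']
  field_simp

theorem continuous_gNeg'' : Continuous (gNeg'' μ σ c_b c_h) := by
  unfold gNeg''
  fun_prop

theorem hasDerivAt_gPos (x : ℝ) :
    HasDerivAt (gPos μ σ c_h) (gPos' μ σ c_h x) x := by
  have h := ((hasDerivAt_pow 2 x).const_mul (c_h / (2 * μ))).add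
    ((hasDerivAt_id x).const_mul (σ ^ 2 * c_h / (2 * μ ^ 2)))
  refine h.congr_deriv ?_
  rw [gPos']
  ring

theorem hasDerivAt_gPos' (x : ℝ) : HasDerivAt (gPos' μ σ c_h) (gPos'' μ c_h x) x :=
  (((hasDerivAt_id x).const_mul (c_h / μ)).add_const _).congr_deriv (by simp [gPos''])

theorem gNeg_zero : gNeg μ σ c_b c_h 0 = gPos μ σ c_h 0 := by
  simp [gNeg, gPos]

theorem gNeg'_zero : gNeg' μ σ c_b c_h 0 = gPos' μ σ c_h 0 := by
  simp only [gNeg', gPos', mul_zero, zero_div, exp_zero]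
  ring

theorem gNeg''_zero : gNeg'' μ σ c_b c_h 0 = gPos'' μ c_h 0 := by
  simp only [gNeg'', gPos'', mul_zero, zero_div, exp_zero]
  ring

theorem gNeg_ode (hμ : μ ≠ 0) (x : ℝ) :
    σ ^ 2 / 2 * gNeg'' μ σ c_b c_h x - μ * gNeg' μ σ c_b c_h x = c_b * x := by
  simp only [gNeg'', gNeg']
  field_simp
  ring

theorem gPos_ode (hμ : μ ≠ 0) (x : ℝ) :
    σ ^ 2 / 2 * gPos'' μ c_h x - μ * gPos' μ σ c_h x = -(c_h * x) := by
  simp only [gPos'', gPos']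
  field_simp
  ring

end DriftedBrownian

open DriftedBrownian

theorem g0_dbm_C2_and_ODE_general (μ σ c_b c_h : ℝ)
    (hμ : 0 < μ) (hσ : 0 < σ)
    (c0 g0 : ℝ → ℝ)
    (hc0_neg : ∀ x < (0 : ℝ), c0 x = -c_b * x)
    (hc0_pos : ∀ x ≥ (0 : ℝ), c0 x = c_h * x)
    (hg0_neg : ∀ x < (0 : ℝ), g0 x =
      -(c_b / (2 * μ)) * x ^ 2 - σ ^ 2 * c_b / (2 * μ ^ 2) * x +
        σ ^ 4 * (c_b + c_h) / (4 * μ ^ 3) * (Real.exp (2 * μ * x / σ ^ 2) - 1))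
    (hg0_pos : ∀ x ≥ (0 : ℝ), g0 x =
      c_h / (2 * μ) * x ^ 2 + σ ^ 2 * c_h / (2 * μ ^ 2) * x) :
    ContDiff ℝ 2 g0 ∧
    (∀ x, σ ^ 2 / 2 * deriv (deriv g0) x - μ * deriv g0 x = -c0 x) := by
  have hg0 : g0 = fun x => if x < 0 then gNeg μ σ c_b c_h x else gPos μ σ c_h x := by
    funext x
    split_ifs with hx
    exacts [hg0_neg x hx, hg0_pos x (not_lt.1 hx)]
  have hf := hasDerivAt_gNeg μ σ c_b c_h hμ.ne'
  have hf' := hasDerivAt_gNeg' μ σ c_b c_h hμ.ne' hσ.ne'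
  have hg := hasDerivAt_gPos μ σ c_h
  have hg' := hasDerivAt_gPos' μ σ c_h
  have h₀ := gNeg_zero μ σ c_b c_h
  have h₁ := gNeg'_zero μ σ c_b c_h
  have h₂ := gNeg''_zero μ σ c_b c_h
  subst hg0
  refine ⟨contDiff_two_ite_lt hf hg hf' hg' (continuous_gNeg'' μ σ c_b c_h) continuous_const
    h₀ h₁ h₂, fun x => ?_⟩
  rw [funext fun x => (hasDerivAt_ite_lt hf hg h₀ h₁ x).deriv,
    (hasDerivAt_ite_lt hf' hg' h₁ h₂ x).deriv]
  dsimp only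
  split_ifs with hx
  · rw [gNeg_ode μ σ c_b c_h hμ.ne', hc0_neg x hx]; ring
  · rw [gPos_ode μ σ c_h hμ.ne', hc0_pos x (not_lt.1 hx)]

/-- The function `g0` of the drifted Brownian motion model is `C²` and satisfies
`(σ²/2)g0'' − μ g0' = −c0`. -/
theorem g0_dbm_C2_and_ODE (μ σ c_b c_h : ℝ)
    (hμ : 0 < μ) (hσ : 0 < σ) (hcb : 0 < c_b) (hch : 0 < c_h)
    (c0 g0 : ℝ → ℝ)
    (hc0_neg : ∀ x < (0 : ℝ), c0 x = -c_b * x)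
    (hc0_pos : ∀ x ≥ (0 : ℝ), c0 x = c_h * x)
    (hg0_neg : ∀ x < (0 : ℝ), g0 x =
      -(c_b / (2 * μ)) * x ^ 2 - σ ^ 2 * c_b / (2 * μ ^ 2) * x +
        σ ^ 4 * (c_b + c_h) / (4 * μ ^ 3) * (Real.exp (2 * μ * x / σ ^ 2) - 1))
    (hg0_pos : ∀ x ≥ (0 : ℝ), g0 x =
      c_h / (2 * μ) * x ^ 2 + σ ^ 2 * c_h / (2 * μ ^ 2) * x) :
    ContDiff ℝ 2 g0 ∧
    (∀ x, σ ^ 2 / 2 * deriv (deriv g0) x - μ * deriv g0 x = -c0 x) :=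
  g0_dbm_C2_and_ODE_general μ σ c_b c_h hμ hσ c0 g0 hc0_neg hc0_pos hg0_neg hg0_pos
end

section
/- The function g0'(x), equal to −(c_b/μ)x − σ²c_b/(2μ²) + (σ²(c_b+c_h)/(2μ²))e^{2μx/σ²} for x < 0 and (c_h/μ)x + σ²c_h/(2μ²) for x ≥ 0, is strictly decreasing on (−∞, x̄) and strictly increasing on (x̄, ∞), where x̄ = (σ²/(2μ)) ln(c_b/(c_b+c_h)) < 0, and g0'(x̄) = −(c_b σ²/(2μ²)) ln(c_b/(c_b+c_h)) > 0. -/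
open Real Set

/-!
On `(-∞, 0]` the function is `A e^{kx} - Bx + C` with `A, k, B > 0`; its derivative
`A k e^{kx} - B` is strictly increasing and vanishes exactly where
`e^{kx̄} = c_b/(c_b+c_h)`, so the function decreases before `x̄` and increases after.
On `[0, ∞)` it is affine with slope `c_h/μ > 0`, and the two formulas agree at `0`,
so the increasing pieces glue. At `x̄` the exponential term cancels the constant term,
leaving `-(c_b/μ) x̄`.
-/

noncomputable def expSubLinear (A k B C x : ℝ) : ℝ := A * exp (k * x) - B * x + C

section ExpSubLinear

variable {A k B : ℝ}

theorem hasDerivAt_expSubLinear (A k B C x : ℝ) :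
    HasDerivAt (expSubLinear A k B C) (A * k * exp (k * x) - B) x := by
  have hexp := ((hasDerivAt_id' x).const_mul k).exp.const_mul A
  have hlin := (hasDerivAt_id' x).const_mul B
  exact ((hexp.sub hlin).add_const C).congr_deriv (by ring)

theorem continuous_expSubLinear (A k B C : ℝ) : Continuous (expSubLinear A k B C) :=
  continuous_iff_continuousAt.2 fun x ↦ (hasDerivAt_expSubLinear A k B C x).continuousAt

theorem strictAntiOn_expSubLinear (hA : 0 < A) (hk : 0 < k) {x₀ : ℝ}
    (hx₀ : A * k * exp (k * x₀) = B) (C : ℝ) :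
    StrictAntiOn (expSubLinear A k B C) (Iic x₀) := by
  refine strictAntiOn_of_deriv_neg (convex_Iic x₀) (continuous_expSubLinear A k B C).continuousOn
    fun x hx ↦ ?_
  rw [interior_Iic, mem_Iio] at hx
  rw [(hasDerivAt_expSubLinear A k B C x).deriv, sub_neg, ← hx₀]
  exact mul_lt_mul_of_pos_left (exp_lt_exp.2 (mul_lt_mul_of_pos_left hx hk)) (mul_pos hA hk)

theorem strictMonoOn_expSubLinear (hA : 0 < A) (hk : 0 < k) {x₀ : ℝ}
    (hx₀ : A * k * exp (k * x₀) = B) (C : ℝ) :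
    StrictMonoOn (expSubLinear A k B C) (Ici x₀) := by
  refine strictMonoOn_of_deriv_pos (convex_Ici x₀) (continuous_expSubLinear A k B C).continuousOn
    fun x hx ↦ ?_
  rw [interior_Ici, mem_Ioi] at hx
  rw [(hasDerivAt_expSubLinear A k B C x).deriv, sub_pos, ← hx₀]
  exact mul_lt_mul_of_pos_left (exp_lt_exp.2 (mul_lt_mul_of_pos_left hx hk)) (mul_pos hA hk)

end ExpSubLinear

theorem eqOn_expSubLinear_Iic_zero {μ σ c_b c_h : ℝ} {g : ℝ → ℝ}
    (hneg : ∀ x < (0 : ℝ), g x = -(c_b / μ) * x - σ ^ 2 * c_b / (2 * μ ^ 2) +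
      σ ^ 2 * (c_b + c_h) / (2 * μ ^ 2) * exp (2 * μ * x / σ ^ 2))
    (hzero : g 0 = σ ^ 2 * c_h / (2 * μ ^ 2)) :
    EqOn (expSubLinear (σ ^ 2 * (c_b + c_h) / (2 * μ ^ 2)) (2 * μ / σ ^ 2) (c_b / μ)
      (-(σ ^ 2 * c_b / (2 * μ ^ 2)))) g (Iic 0) := by
  intro x hx
  rcases (mem_Iic.1 hx).lt_or_eq with hx | rfl
  · rw [hneg x hx, mul_div_right_comm (2 * μ) x, expSubLinear]
    ring
  · rw [hzero, expSubLinear, mul_zero, exp_zero]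
    ring

/-- `g0'` is strictly decreasing on `(−∞, x̄)`, strictly increasing on `(x̄, ∞)`,
where `x̄ = (σ²/(2μ)) ln(c_b/(c_b+c_h)) < 0`, and `g0'(x̄) > 0`. -/
theorem g0_deriv_dbm_monotonicity (μ σ c_b c_h : ℝ)
    (hμ : 0 < μ) (hσ : 0 < σ) (hcb : 0 < c_b) (hch : 0 < c_h)
    (g1 : ℝ → ℝ)
    (hg1_neg : ∀ x < (0 : ℝ), g1 x =
      -(c_b / μ) * x - σ ^ 2 * c_b / (2 * μ ^ 2) +
        σ ^ 2 * (c_b + c_h) / (2 * μ ^ 2) * Real.exp (2 * μ * x / σ ^ 2))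
    (hg1_pos : ∀ x ≥ (0 : ℝ), g1 x = c_h / μ * x + σ ^ 2 * c_h / (2 * μ ^ 2))
    (xbar : ℝ) (hxbar : xbar = σ ^ 2 / (2 * μ) * Real.log (c_b / (c_b + c_h))) :
    xbar < 0 ∧
    StrictAntiOn g1 (Iio xbar) ∧
    StrictMonoOn g1 (Ioi xbar) ∧
    g1 xbar = -(c_b * σ ^ 2 / (2 * μ ^ 2)) * Real.log (c_b / (c_b + c_h)) ∧
    0 < g1 xbar := by
  have hlog : log (c_b / (c_b + c_h)) < 0 :=
    log_neg (by positivity) ((div_lt_one (by positivity)).2 (by linarith))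
  have hxbar_neg : xbar < 0 := hxbar ▸ mul_neg_of_pos_of_neg (by positivity) hlog
  have hexp : exp (2 * μ / σ ^ 2 * xbar) = c_b / (c_b + c_h) := by
    have hkx : 2 * μ / σ ^ 2 * xbar = log (c_b / (c_b + c_h)) := by
      rw [hxbar]
      field_simp
    rw [hkx, exp_log (by positivity)]
  have hcrit : σ ^ 2 * (c_b + c_h) / (2 * μ ^ 2) * (2 * μ / σ ^ 2) *
      exp (2 * μ / σ ^ 2 * xbar) = c_b / μ := by
    rw [hexp]
    field_simp
  have hf := eqOn_expSubLinear_Iic_zero hg1_neg (by simpa using hg1_pos 0 le_rfl)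
  have hlin : StrictMonoOn g1 (Ici 0) := fun x hx y hy hxy ↦ by
    rw [hg1_pos x hx, hg1_pos y hy]
    gcongr
  have hval : g1 xbar = -(c_b * σ ^ 2 / (2 * μ ^ 2)) * log (c_b / (c_b + c_h)) := by
    rw [hg1_neg xbar hxbar_neg, mul_div_right_comm (2 * μ) xbar, hexp, hxbar]
    field_simp
    ring
  refine ⟨hxbar_neg, ?_, ?_, hval, ?_⟩
  · exact ((strictAntiOn_expSubLinear (by positivity) (by positivity) hcrit _).congr
      (hf.mono (Iic_subset_Iic.2 hxbar_neg.le))).mono Iio_subset_Iic_self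
  · rw [← Ioc_union_Ici_eq_Ioi hxbar_neg]
    refine StrictMonoOn.union ?_ hlin (isGreatest_Ioc hxbar_neg) isLeast_Ici
    exact ((strictMonoOn_expSubLinear (by positivity) (by positivity) hcrit _).mono
      (Ioc_subset_Icc_self.trans Icc_subset_Ici_self)).congr (hf.mono Ioc_subset_Iic_self)
  · rw [hval]
    exact mul_pos_of_neg_of_neg (neg_neg_of_pos (by positivity)) hlog
end

section
/- For a drifted Brownian motion with reflection at 0, cost rates c_h > 0 (holding), k1 > 0 (fixed order cost), k2 (proportional order cost), the function F(y,z) = (k1 + k2(z−y) + (c_h/(2μ))(z²−y²) + (σ²c_h/(2μ²))(z−y)) / ((z−y)/μ) over 0 ≤ y < z attains its minimum at (y*, z*) = (0, √(2k1μ/c_h)), with minimum value F* = √(2k1μc_h) + k2μ + σ²c_h/(2μ). -/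
/-!
Dividing out the cycle length `(z - y)/μ`, the cost rate becomes
`k1μ/(z - y) + c_h(z - y)/2 + c_h y + k2μ + σ²c_h/(2μ)`. The term `c_h y` is minimised by `y = 0`,
and by AM-GM the first two terms are at least `√(2k1μc_h)`, with equality at `z - y = √(2k1μ/c_h)`.
-/

open Real

lemma cost_rate_eq {μ σ c_h k1 k2 y z : ℝ} (hμ : μ ≠ 0) (hyz : y ≠ z) :
    (k1 + k2 * (z - y) + c_h / (2 * μ) * (z ^ 2 - y ^ 2) +
        σ ^ 2 * c_h / (2 * μ ^ 2) * (z - y)) / ((z - y) / μ) =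
      k1 * μ / (z - y) + c_h * (z - y) / 2 + c_h * y + (k2 * μ + σ ^ 2 * c_h / (2 * μ)) := by
  have hzy : z - y ≠ 0 := sub_ne_zero.2 hyz.symm
  field_simp
  ring

lemma sqrt_two_mul_le_div_add_mul_div_two {a b t : ℝ} (ha : 0 ≤ a) (hb : 0 ≤ b) (ht : 0 < t) :
    √(2 * a * b) ≤ a / t + b * t / 2 := by
  have hsq : (a / t + b * t / 2) ^ 2 = (a / t - b * t / 2) ^ 2 + 2 * a * b := by
    field_simp
    ring
  rw [sqrt_le_iff]
  exact ⟨by positivity, by nlinarith [sq_nonneg (a / t - b * t / 2)]⟩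

lemma div_sqrt_add_mul_sqrt_div_two {a b : ℝ} (ha : 0 < a) (hb : 0 < b) :
    a / √(2 * a / b) + b * √(2 * a / b) / 2 = √(2 * a * b) := by
  set t := √(2 * a / b)
  have ht_pos : 0 < t := sqrt_pos.2 (by positivity)
  have hbt_sq : b * t ^ 2 = 2 * a := by
    rw [sq_sqrt (by positivity)]
    field_simp
  have hbt : b * t = √(2 * a * b) := by
    rw [eq_comm, sqrt_eq_iff_mul_self_eq (by positivity) (by positivity)]
    linear_combination (-b) * hbt_sq
  have hat : a / t = b * t / 2 := by
    rw [div_eq_div_iff ht_pos.ne' two_ne_zero]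
    linear_combination -hbt_sq
  rw [hat, ← hbt]
  ring

theorem F_min_reflected_dbm_general (μ σ c_h k1 k2 : ℝ)
    (hμ : 0 < μ) (hch : 0 < c_h) (hk1 : 0 < k1)
    (F : ℝ → ℝ → ℝ)
    (hF : ∀ y z, 0 ≤ y → y < z →
      F y z = (k1 + k2 * (z - y) + c_h / (2 * μ) * (z ^ 2 - y ^ 2) +
        σ ^ 2 * c_h / (2 * μ ^ 2) * (z - y)) / ((z - y) / μ))
    (ystar zstar Fstar : ℝ)
    (hy : ystar = 0) (hz : zstar = Real.sqrt (2 * k1 * μ / c_h))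
    (hFs : Fstar = Real.sqrt (2 * k1 * μ * c_h) + k2 * μ + σ ^ 2 * c_h / (2 * μ)) :
    F ystar zstar = Fstar ∧
    (∀ y z, 0 ≤ y → y < z → Fstar ≤ F y z) := by
  have hF' : ∀ y z, 0 ≤ y → y < z → F y z =
      k1 * μ / (z - y) + c_h * (z - y) / 2 + c_h * y + (k2 * μ + σ ^ 2 * c_h / (2 * μ)) :=
    fun y z hy hyz => (hF y z hy hyz).trans (cost_rate_eq hμ.ne' hyz.ne)
  have hk1μ : 0 < k1 * μ := mul_pos hk1 hμ
  subst hy hz hFs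
  rw [mul_assoc 2 k1 μ]
  constructor
  · rw [hF' 0 _ le_rfl (sqrt_pos.2 (by positivity)), sub_zero,
      div_sqrt_add_mul_sqrt_div_two hk1μ hch]
    ring
  · intro y z hy hyz
    rw [hF' y z hy hyz]
    have amgm := sqrt_two_mul_le_div_add_mul_div_two hk1μ.le hch.le (sub_pos.2 hyz)
    linarith [mul_nonneg hch.le hy]

/-- For the reflected drifted Brownian motion model, `F` attains its minimum
over `0 ≤ y < z` at `(0, √(2k1μ/c_h))` with value `√(2k1μc_h) + k2μ + σ²c_h/(2μ)`. -/
theorem F_min_reflected_dbm (μ σ c_h k1 k2 : ℝ)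
    (hμ : 0 < μ) (hσ : 0 < σ) (hch : 0 < c_h) (hk1 : 0 < k1) (hk2 : 0 ≤ k2)
    (F : ℝ → ℝ → ℝ)
    (hF : ∀ y z, 0 ≤ y → y < z →
      F y z = (k1 + k2 * (z - y) + c_h / (2 * μ) * (z ^ 2 - y ^ 2) +
        σ ^ 2 * c_h / (2 * μ ^ 2) * (z - y)) / ((z - y) / μ))
    (ystar zstar Fstar : ℝ)
    (hy : ystar = 0) (hz : zstar = Real.sqrt (2 * k1 * μ / c_h))
    (hFs : Fstar = Real.sqrt (2 * k1 * μ * c_h) + k2 * μ + σ ^ 2 * c_h / (2 * μ)) :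
    F ystar zstar = Fstar ∧
    (∀ y z, 0 ≤ y → y < z → Fstar ≤ F y z) :=
  F_min_reflected_dbm_general μ σ c_h k1 k2 hμ hch hk1 F hF ystar zstar Fstar hy hz hFs
end

section
/- In the GBM model with k3 = 0: define F(y,z) = (k1 + k2(z^η − y^η) − (k4/ρ̃(β))(z^β − y^β)) / ((2/(2μ+σ²))(ln z − ln y)) for 0 < y < z. Then F(y,z) → ∞ in each of the limits: (z−y) → 0 with y,z → x̄ ∈ (0,∞); z → ∞ with y fixed; (y,z) → (∞,∞); y → 0 with z fixed; (y,z) → (0,∞); and (y,z) → (0,0). Consequently F attains its minimum at some (y*, z*) with 0 < y* < z* < ∞. -/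
open Real Set Filter Topology

/-!
Write `L = log z - log y`. Since `z ^ r = y ^ r * exp (r * L)`, convexity of `exp` gives
`z ^ η - y ^ η ≥ η y ^ η L` and `y ^ β - z ^ β ≥ -β z ^ β L`, hence
`F ≥ k1 / (c L) + (k2 η y ^ η - (k4 / ρ̃) β z ^ β) / c`:
this forces `F → ∞` along the diagonal, at `(∞, ∞)` and at `(0, 0)`.
Splitting `L` at a pivot `y ≤ w ≤ z` and using `exp t ≥ 1 + t + t ^ 2 / 2` on both halves gives
`F ≥ κ(w) L` with `κ(w) > 0` bounded below for `w` in a compact interval, which forces `F → ∞`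
wherever `L → ∞`. Together the two bounds confine every sublevel set of `F` to a compact subset of
`{0 < y < z}`, on which the continuous `F` attains its minimum.
-/

theorem rpow_mul_add_sq_le_rpow_sub_rpow {y z r : ℝ} (hy : 0 < y) (hz : 0 < z)
    (h : 0 ≤ r * (log z - log y)) :
    y ^ r * (r * (log z - log y) + (r * (log z - log y)) ^ 2 / 2) ≤ z ^ r - y ^ r := by
  have hzr : z ^ r = y ^ r * exp (r * (log z - log y)) := by
    rw [rpow_def_of_pos hz, rpow_def_of_pos hy, ← exp_add]
    ring_nf
  rw [hzr]
  nlinarith [quadratic_le_exp_of_nonneg h, rpow_pos_of_pos hy r]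

theorem rpow_mul_le_rpow_sub_rpow {y z r : ℝ} (hy : 0 < y) (hz : 0 < z)
    (h : 0 ≤ r * (log z - log y)) :
    y ^ r * (r * (log z - log y)) ≤ z ^ r - y ^ r := by
  have := rpow_mul_add_sq_le_rpow_sub_rpow hy hz h
  nlinarith [rpow_pos_of_pos hy r, sq_nonneg (r * (log z - log y))]

theorem rpow_mul_sq_le_rpow_sub_rpow {y z r : ℝ} (hy : 0 < y) (hz : 0 < z)
    (h : 0 ≤ r * (log z - log y)) :
    y ^ r * (r * (log z - log y)) ^ 2 / 2 ≤ z ^ r - y ^ r := by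
  have := rpow_mul_add_sq_le_rpow_sub_rpow hy hz h
  nlinarith [rpow_pos_of_pos hy r]

theorem exists_pos_bound_of_tendsto_atTop {g : ℝ → ℝ} (hg : Tendsto g atTop atTop) (M : ℝ) :
    ∃ Y > 0, ∀ x, g x ≤ M → x ≤ Y := by
  obtain ⟨Y, hY⟩ := eventually_atTop.1 (hg.eventually_gt_atTop M)
  exact ⟨max Y 1, by positivity,
    fun x hM => le_of_not_gt fun hx => (hY x ((le_max_left _ _).trans hx.le)).not_ge hM⟩

theorem exists_pos_bound_of_tendsto_nhdsGT_zero {g : ℝ → ℝ} (hg : Tendsto g (𝓝[>] 0) atTop)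
    (M : ℝ) : ∃ ε > 0, ∀ x > 0, g x ≤ M → ε ≤ x := by
  obtain ⟨ε, hε, h⟩ := (nhdsGT_basis (0 : ℝ)).eventually_iff.1 (hg.eventually_gt_atTop M)
  exact ⟨ε, hε, fun x hx hM => le_of_not_gt fun hxε => (h ⟨hx, hxε⟩).not_ge hM⟩

theorem ContinuousOn.exists_isMinOn_of_sublevel_subset {X α : Type*} [TopologicalSpace X]
    [LinearOrder α] [TopologicalSpace α] [ClosedIicTopology α] {f : X → α} {D K : Set X}
    {x₀ : X} (hf : ContinuousOn f D) (hx₀ : x₀ ∈ D) (hK : IsCompact K) (hKD : K ⊆ D)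
    (hsub : ∀ x ∈ D, f x ≤ f x₀ → x ∈ K) : ∃ x ∈ D, IsMinOn f D x := by
  have hx₀K := hsub x₀ hx₀ le_rfl
  obtain ⟨x, hxK, hmin⟩ := hK.exists_isMinOn ⟨x₀, hx₀K⟩ (hf.mono hKD)
  refine ⟨x, hKD hxK, fun y hy => ?_⟩
  rcases le_total (f y) (f x₀) with h | h
  · exact hmin (hsub y hy h)
  · exact (hmin hx₀K).trans h

-- The paper's `F` with `a = k2`, `b = k4 / ρ̃(β)` and `c = 2 / (2μ + σ²)`.
noncomputable def costRatio (k1 a b c η β y z : ℝ) : ℝ :=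
  (k1 + a * (z ^ η - y ^ η) - b * (z ^ β - y ^ β)) / (c * (log z - log y))

variable {k1 a b c η β : ℝ}

theorem div_add_div_le_costRatio (ha : 0 ≤ a) (hb : 0 ≤ b) (hc : 0 < c) (hη : 0 ≤ η)
    (hβ : β ≤ 0) {y z : ℝ} (hy : 0 < y) (hyz : y < z) :
    k1 / (c * (log z - log y)) + (a * η * y ^ η + b * (-β) * z ^ β) / c
      ≤ costRatio k1 a b c η β y z := by
  have hz := hy.trans hyz
  have hL : 0 < log z - log y := sub_pos.2 (log_lt_log hy hyz)
  have hup := rpow_mul_le_rpow_sub_rpow hy hz (mul_nonneg hη hL.le)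
  have hdown := rpow_mul_le_rpow_sub_rpow hz hy (r := β) (by nlinarith)
  calc k1 / (c * (log z - log y)) + (a * η * y ^ η + b * (-β) * z ^ β) / c
      = (k1 + (a * η * y ^ η + b * (-β) * z ^ β) * (log z - log y)) / (c * (log z - log y)) := by
        field_simp
    _ ≤ costRatio k1 a b c η β y z := by
        rw [costRatio]
        gcongr
        nlinarith

theorem div_le_costRatio (ha : 0 ≤ a) (hb : 0 ≤ b) (hc : 0 < c) (hη : 0 ≤ η) (hβ : β ≤ 0)
    {y z : ℝ} (hy : 0 < y) (hyz : y < z) :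
    k1 / (c * (log z - log y)) ≤ costRatio k1 a b c η β y z := by
  have := hy.trans hyz
  have := neg_nonneg.2 hβ
  have : 0 ≤ (a * η * y ^ η + b * (-β) * z ^ β) / c := by positivity
  linarith [div_add_div_le_costRatio (k1 := k1) ha hb hc hη hβ hy hyz]

theorem mul_rpow_fst_le_costRatio (hk1 : 0 ≤ k1) (ha : 0 ≤ a) (hb : 0 ≤ b) (hc : 0 < c)
    (hη : 0 ≤ η) (hβ : β ≤ 0) {y z : ℝ} (hy : 0 < y) (hyz : y < z) :
    a * η / c * y ^ η ≤ costRatio k1 a b c η β y z := by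
  have := hy.trans hyz
  have := neg_nonneg.2 hβ
  have := sub_pos.2 (log_lt_log hy hyz)
  have : 0 ≤ k1 / (c * (log z - log y)) + b * (-β) * z ^ β / c := by positivity
  calc a * η / c * y ^ η
      ≤ k1 / (c * (log z - log y)) + (a * η * y ^ η + b * (-β) * z ^ β) / c := by
        rw [add_div, div_mul_eq_mul_div]
        linarith
    _ ≤ costRatio k1 a b c η β y z := div_add_div_le_costRatio ha hb hc hη hβ hy hyz

theorem mul_rpow_snd_le_costRatio (hk1 : 0 ≤ k1) (ha : 0 ≤ a) (hb : 0 ≤ b) (hc : 0 < c)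
    (hη : 0 ≤ η) (hβ : β ≤ 0) {y z : ℝ} (hy : 0 < y) (hyz : y < z) :
    b * (-β) / c * z ^ β ≤ costRatio k1 a b c η β y z := by
  have := hy.trans hyz
  have := sub_pos.2 (log_lt_log hy hyz)
  have : 0 ≤ k1 / (c * (log z - log y)) + a * η * y ^ η / c := by positivity
  calc b * (-β) / c * z ^ β
      ≤ k1 / (c * (log z - log y)) + (a * η * y ^ η + b * (-β) * z ^ β) / c := by
        rw [add_div, div_mul_eq_mul_div]
        linarith
    _ ≤ costRatio k1 a b c η β y z := div_add_div_le_costRatio ha hb hc hη hβ hy hyz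

-- Split `log z - log y = s + t` at `w`: the quadratic terms of `exp` bound the numerator below
-- by `m (s ^ 2 + t ^ 2) / 2 ≥ m (s + t) ^ 2 / 4`, where `m` is the `min`.
theorem min_div_mul_log_sub_le_costRatio (hk1 : 0 ≤ k1) (ha : 0 ≤ a) (hb : 0 ≤ b) (hc : 0 < c)
    (hη : 0 ≤ η) (hβ : β ≤ 0) {y w z : ℝ} (hy : 0 < y) (hyw : y ≤ w) (hwz : w ≤ z) (hyz : y < z) :
    min (a * η ^ 2 * w ^ η) (b * β ^ 2 * w ^ β) / (4 * c) * (log z - log y)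
      ≤ costRatio k1 a b c η β y z := by
  set m := min (a * η ^ 2 * w ^ η) (b * β ^ 2 * w ^ β)
  have hw : 0 < w := hy.trans_le hyw
  have hz : 0 < z := hy.trans hyz
  have hL : 0 < log z - log y := sub_pos.2 (log_lt_log hy hyz)
  have hs : 0 ≤ log z - log w := sub_nonneg.2 (log_le_log hw hwz)
  have ht : 0 ≤ log w - log y := sub_nonneg.2 (log_le_log hy hyw)
  have hup : a * η ^ 2 * w ^ η * (log z - log w) ^ 2 / 2 ≤ a * (z ^ η - y ^ η) := by
    have := rpow_mul_sq_le_rpow_sub_rpow hw hz (mul_nonneg hη hs)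
    have := rpow_le_rpow hy.le hyw hη
    nlinarith
  have hdown : b * β ^ 2 * w ^ β * (log w - log y) ^ 2 / 2 ≤ -(b * (z ^ β - y ^ β)) := by
    have := rpow_mul_sq_le_rpow_sub_rpow hw hy (r := β) (by nlinarith)
    have := rpow_le_rpow_of_nonpos hw hwz hβ
    nlinarith
  have hm : m * (log z - log y) ^ 2 / 4 ≤ k1 + a * (z ^ η - y ^ η) - b * (z ^ β - y ^ β) := by
    have h1 : m * (log z - log w) ^ 2 ≤ a * η ^ 2 * w ^ η * (log z - log w) ^ 2 :=
      mul_le_mul_of_nonneg_right (min_le_left _ _) (sq_nonneg _)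
    have h2 : m * (log w - log y) ^ 2 ≤ b * β ^ 2 * w ^ β * (log w - log y) ^ 2 :=
      mul_le_mul_of_nonneg_right (min_le_right _ _) (sq_nonneg _)
    have hm0 : 0 ≤ m := le_min (by positivity) (by positivity)
    nlinarith [mul_nonneg hm0 (sq_nonneg (log z - log w - (log w - log y)))]
  calc m / (4 * c) * (log z - log y)
      = m * (log z - log y) ^ 2 / 4 / (c * (log z - log y)) := by
        field_simp
    _ ≤ costRatio k1 a b c η β y z := by
        rw [costRatio]
        gcongr

def orderedPosPairs : Set (ℝ × ℝ) := {p | 0 < p.1 ∧ p.1 < p.2}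

theorem eventually_mem_orderedPosPairs (l : Filter (ℝ × ℝ)) :
    ∀ᶠ p in l ⊓ 𝓟 orderedPosPairs, 0 < p.1 ∧ p.1 < p.2 :=
  mem_inf_of_right (mem_principal_self _)

theorem tendsto_costRatio_nhds_diag (hk1 : 0 < k1) (ha : 0 ≤ a) (hb : 0 ≤ b) (hc : 0 < c)
    (hη : 0 ≤ η) (hβ : β ≤ 0) {x : ℝ} (hx : 0 < x) :
    Tendsto (fun p : ℝ × ℝ => costRatio k1 a b c η β p.1 p.2)
      (𝓝 (x, x) ⊓ 𝓟 orderedPosPairs) atTop := by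
  have hL : Tendsto (fun p : ℝ × ℝ => c * (log p.2 - log p.1))
      (𝓝 (x, x) ⊓ 𝓟 orderedPosPairs) (𝓝[>] 0) := by
    refine tendsto_nhdsWithin_iff.2 ⟨?_, ?_⟩
    · have : ContinuousAt (fun p : ℝ × ℝ => c * (log p.2 - log p.1)) (x, x) := by
        fun_prop (disch := exact hx.ne')
      simpa using this.tendsto.mono_left inf_le_left
    · filter_upwards [eventually_mem_orderedPosPairs _] with p hp
      exact mul_pos hc (sub_pos.2 (log_lt_log hp.1 hp.2))
  refine tendsto_atTop_mono' _ ?_ (hL.inv_tendsto_nhdsGT_zero.const_mul_atTop hk1)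
  filter_upwards [eventually_mem_orderedPosPairs _] with p hp
  simpa only [Pi.inv_apply, ← div_eq_mul_inv] using div_le_costRatio ha hb hc hη hβ hp.1 hp.2

theorem tendsto_costRatio_atTop_atTop (hk1 : 0 ≤ k1) (ha : 0 < a) (hb : 0 ≤ b) (hc : 0 < c)
    (hη : 0 < η) (hβ : β ≤ 0) :
    Tendsto (fun p : ℝ × ℝ => costRatio k1 a b c η β p.1 p.2)
      ((atTop ×ˢ atTop) ⊓ 𝓟 orderedPosPairs) atTop := by
  refine tendsto_atTop_mono' _ ?_ (((tendsto_rpow_atTop hη).comp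
    (tendsto_fst.mono_left inf_le_left)).const_mul_atTop (by positivity : 0 < a * η / c))
  filter_upwards [eventually_mem_orderedPosPairs _] with p hp
  exact mul_rpow_fst_le_costRatio hk1 ha.le hb hc hη.le hβ hp.1 hp.2

theorem tendsto_costRatio_nhds_zero_zero (hk1 : 0 ≤ k1) (ha : 0 ≤ a) (hb : 0 < b) (hc : 0 < c)
    (hη : 0 ≤ η) (hβ : β < 0) :
    Tendsto (fun p : ℝ × ℝ => costRatio k1 a b c η β p.1 p.2)
      (𝓝 (0, 0) ⊓ 𝓟 orderedPosPairs) atTop := by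
  have hz : Tendsto (fun p : ℝ × ℝ => p.2) (𝓝 (0, 0) ⊓ 𝓟 orderedPosPairs) (𝓝[>] 0) := by
    refine tendsto_nhdsWithin_iff.2 ⟨continuousAt_snd.tendsto.mono_left inf_le_left, ?_⟩
    filter_upwards [eventually_mem_orderedPosPairs _] with p hp
    exact hp.1.trans hp.2
  have hκ : 0 < b * (-β) / c := by
    have := neg_pos.2 hβ
    positivity
  refine tendsto_atTop_mono' _ ?_
    (((tendsto_rpow_neg_nhdsGT_zero hβ).comp hz).const_mul_atTop hκ)
  filter_upwards [eventually_mem_orderedPosPairs _] with p hp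
  exact mul_rpow_snd_le_costRatio hk1 ha hb.le hc hη hβ.le hp.1 hp.2

theorem tendsto_costRatio_atTop_right (hk1 : 0 ≤ k1) (ha : 0 < a) (hb : 0 < b) (hc : 0 < c)
    (hη : 0 < η) (hβ : β < 0) {y : ℝ} (hy : 0 < y) :
    Tendsto (fun z => costRatio k1 a b c η β y z) atTop atTop := by
  have hκ : 0 < min (a * η ^ 2 * y ^ η) (b * β ^ 2 * y ^ β) / (4 * c) := by
    have := hβ.ne
    positivity
  refine tendsto_atTop_mono' _ ?_
    ((tendsto_atTop_add_const_right _ (-log y) tendsto_log_atTop).const_mul_atTop hκ)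
  filter_upwards [eventually_gt_atTop y] with z hz
  rw [← sub_eq_add_neg]
  exact min_div_mul_log_sub_le_costRatio hk1 ha.le hb.le hc hη.le hβ.le hy le_rfl hz.le hz

theorem tendsto_costRatio_nhdsGT_zero_left (hk1 : 0 ≤ k1) (ha : 0 < a) (hb : 0 < b) (hc : 0 < c)
    (hη : 0 < η) (hβ : β < 0) {z : ℝ} (hz : 0 < z) :
    Tendsto (fun y => costRatio k1 a b c η β y z) (𝓝[>] 0) atTop := by
  have hκ : 0 < min (a * η ^ 2 * z ^ η) (b * β ^ 2 * z ^ β) / (4 * c) := by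
    have := hβ.ne
    positivity
  refine tendsto_atTop_mono' _ ?_ ((tendsto_atTop_add_const_left _ (log z)
    (tendsto_neg_atBot_atTop.comp tendsto_log_nhdsGT_zero)).const_mul_atTop hκ)
  filter_upwards [Ioo_mem_nhdsGT hz] with y hy
  simp only [Function.comp_apply, ← sub_eq_add_neg]
  exact min_div_mul_log_sub_le_costRatio hk1 ha.le hb.le hc hη.le hβ.le hy.1 hy.2.le le_rfl hy.2

theorem tendsto_costRatio_nhdsGT_zero_atTop (hk1 : 0 ≤ k1) (ha : 0 < a) (hb : 0 < b)
    (hc : 0 < c) (hη : 0 < η) (hβ : β < 0) :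
    Tendsto (fun p : ℝ × ℝ => costRatio k1 a b c η β p.1 p.2)
      ((𝓝[>] 0 ×ˢ atTop) ⊓ 𝓟 orderedPosPairs) atTop := by
  have hκ : 0 < min (a * η ^ 2 * 1 ^ η) (b * β ^ 2 * 1 ^ β) / (4 * c) := by
    have := hβ.ne
    positivity
  have hL : Tendsto (fun p : ℝ × ℝ => log p.2 + -log p.1)
      ((𝓝[>] 0 ×ˢ atTop) ⊓ 𝓟 orderedPosPairs) atTop :=
    ((tendsto_log_atTop.comp tendsto_snd).atTop_add_atTop
      ((tendsto_neg_atBot_atTop.comp tendsto_log_nhdsGT_zero).comp tendsto_fst)).mono_left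
      inf_le_left
  refine tendsto_atTop_mono' _ ?_ (hL.const_mul_atTop hκ)
  filter_upwards [eventually_mem_orderedPosPairs _, mem_inf_of_left
    (prod_mem_prod (Ioo_mem_nhdsGT one_pos) (Ici_mem_atTop 1))] with p hp hp1
  rw [← sub_eq_add_neg]
  exact min_div_mul_log_sub_le_costRatio hk1 ha.le hb.le hc hη.le hβ.le hp.1 hp1.1.2.le hp1.2 hp.2

theorem continuousOn_costRatio (hc : c ≠ 0) :
    ContinuousOn (fun p : ℝ × ℝ => costRatio k1 a b c η β p.1 p.2) orderedPosPairs := by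
  rintro p ⟨hy, hyz⟩
  have hy' := hy.ne'
  have hz' := (hy.trans hyz).ne'
  have hL : c * (log p.2 - log p.1) ≠ 0 := mul_ne_zero hc (sub_pos.2 (log_lt_log hy hyz)).ne'
  refine ContinuousAt.continuousWithinAt ?_
  unfold costRatio
  fun_prop (disch := first | assumption | exact Or.inl ‹_›)

theorem exists_fst_le_of_costRatio_le (hk1 : 0 ≤ k1) (ha : 0 < a) (hb : 0 ≤ b) (hc : 0 < c)
    (hη : 0 < η) (hβ : β ≤ 0) (M : ℝ) :
    ∃ Y > 0, ∀ p ∈ orderedPosPairs, costRatio k1 a b c η β p.1 p.2 ≤ M → p.1 ≤ Y := by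
  obtain ⟨Y, hY, h⟩ := exists_pos_bound_of_tendsto_atTop
    ((tendsto_rpow_atTop hη).const_mul_atTop (by positivity : 0 < a * η / c)) M
  exact ⟨Y, hY, fun p hp hM =>
    h _ ((mul_rpow_fst_le_costRatio hk1 ha.le hb hc hη.le hβ hp.1 hp.2).trans hM)⟩

theorem exists_le_snd_of_costRatio_le (hk1 : 0 ≤ k1) (ha : 0 ≤ a) (hb : 0 < b) (hc : 0 < c)
    (hη : 0 ≤ η) (hβ : β < 0) (M : ℝ) :
    ∃ Z > 0, ∀ p ∈ orderedPosPairs, costRatio k1 a b c η β p.1 p.2 ≤ M → Z ≤ p.2 := by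
  have hκ : 0 < b * (-β) / c := by
    have := neg_pos.2 hβ
    positivity
  obtain ⟨Z, hZ, h⟩ := exists_pos_bound_of_tendsto_nhdsGT_zero
    ((tendsto_rpow_neg_nhdsGT_zero hβ).const_mul_atTop hκ) M
  exact ⟨Z, hZ, fun p hp hM => h _ (hp.1.trans hp.2)
    ((mul_rpow_snd_le_costRatio hk1 ha hb.le hc hη hβ.le hp.1 hp.2).trans hM)⟩

theorem exists_le_log_sub_of_costRatio_le (hk1 : 0 < k1) (ha : 0 ≤ a) (hb : 0 ≤ b) (hc : 0 < c)
    (hη : 0 ≤ η) (hβ : β ≤ 0) (M : ℝ) :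
    ∃ δ > 0, ∀ p ∈ orderedPosPairs, costRatio k1 a b c η β p.1 p.2 ≤ M →
      δ ≤ log p.2 - log p.1 := by
  obtain ⟨δ, hδ, h⟩ := exists_pos_bound_of_tendsto_nhdsGT_zero
    (tendsto_inv_nhdsGT_zero.const_mul_atTop (by positivity : 0 < k1 / c)) M
  refine ⟨δ, hδ, fun p hp hM => h _ (sub_pos.2 (log_lt_log hp.1 hp.2)) ?_⟩
  calc k1 / c * (log p.2 - log p.1)⁻¹ = k1 / (c * (log p.2 - log p.1)) := by
        rw [← div_eq_mul_inv, div_div]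
    _ ≤ M := (div_le_costRatio ha hb hc hη hβ hp.1 hp.2).trans hM

theorem exists_log_sub_le_of_costRatio_le (hk1 : 0 ≤ k1) (ha : 0 < a) (hb : 0 < b) (hc : 0 < c)
    (hη : 0 < η) (hβ : β < 0) (M : ℝ) :
    ∃ Λ, ∀ p ∈ orderedPosPairs, costRatio k1 a b c η β p.1 p.2 ≤ M →
      log p.2 - log p.1 ≤ Λ := by
  obtain ⟨Y, hY, hfst⟩ := exists_fst_le_of_costRatio_le hk1 ha hb.le hc hη hβ.le M
  obtain ⟨Z, hZ, hsnd⟩ := exists_le_snd_of_costRatio_le hk1 ha.le hb hc hη.le hβ M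
  set κ := min (a * η ^ 2 * (min Z Y) ^ η) (b * β ^ 2 * Y ^ β) / (4 * c)
  have hκ : 0 < κ := by
    have := hβ.ne
    positivity
  refine ⟨M / κ, fun p hp hM => ?_⟩
  -- The pivot `min p.2 Y` lies in `[min Z Y, Y]`, where the pivot rate is at least `κ`.
  set w := min p.2 Y
  have hw : min Z Y ≤ w := min_le_min_right _ (hsnd p hp hM)
  have hwY : w ≤ Y := min_le_right _ _
  have hκw : κ ≤ min (a * η ^ 2 * w ^ η) (b * β ^ 2 * w ^ β) / (4 * c) := by
    refine div_le_div_of_nonneg_right (min_le_min ?_ ?_) (by positivity)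
    · exact mul_le_mul_of_nonneg_left (rpow_le_rpow (by positivity) hw hη.le) (by positivity)
    · exact mul_le_mul_of_nonneg_left
        (rpow_le_rpow_of_nonpos ((lt_min hZ hY).trans_le hw) hwY hβ.le) (by positivity)
  have hpivot := min_div_mul_log_sub_le_costRatio hk1 ha.le hb.le hc hη.le hβ.le hp.1
    (le_min hp.2.le (hfst p hp hM)) (min_le_left _ _) hp.2
  rw [le_div_iff₀ hκ]
  nlinarith [sub_pos.2 (log_lt_log hp.1 hp.2)]

theorem exists_isCompact_sublevel_costRatio (hk1 : 0 < k1) (ha : 0 < a) (hb : 0 < b) (hc : 0 < c)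
    (hη : 0 < η) (hβ : β < 0) (M : ℝ) :
    ∃ K ⊆ orderedPosPairs, IsCompact K ∧
      ∀ p ∈ orderedPosPairs, costRatio k1 a b c η β p.1 p.2 ≤ M → p ∈ K := by
  obtain ⟨Y, hY, hfst⟩ := exists_fst_le_of_costRatio_le hk1.le ha hb.le hc hη hβ.le M
  obtain ⟨Z, hZ, hsnd⟩ := exists_le_snd_of_costRatio_le hk1.le ha.le hb hc hη.le hβ M
  obtain ⟨δ, hδ, hlow⟩ := exists_le_log_sub_of_costRatio_le hk1 ha.le hb.le hc hη.le hβ.le M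
  obtain ⟨Λ, hupp⟩ := exists_log_sub_le_of_costRatio_le hk1.le ha hb hc hη hβ M
  refine ⟨(Icc (Z * exp (-Λ)) Y ×ˢ Icc Z (Y * exp Λ)) ∩ {p | p.1 * exp δ ≤ p.2}, ?_, ?_, ?_⟩
  · rintro p ⟨⟨⟨hZp, -⟩, -⟩, hδp⟩
    have hy : 0 < p.1 := (by positivity : 0 < Z * exp (-Λ)).trans_le hZp
    exact ⟨hy, (lt_mul_of_one_lt_right hy (one_lt_exp_iff.2 hδ)).trans_le hδp⟩
  · exact (isCompact_Icc.prod isCompact_Icc).inter_right (isClosed_le (by fun_prop) (by fun_prop))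
  · intro p hp hM
    have hz := hp.1.trans hp.2
    have hp2 : p.2 = p.1 * exp (log p.2 - log p.1) := by
      rw [exp_sub, exp_log hz, exp_log hp.1, mul_div_cancel₀ _ hp.1.ne']
    have hp1 : p.1 = p.2 * exp (-(log p.2 - log p.1)) := by
      rw [exp_neg, exp_sub, exp_log hz, exp_log hp.1, inv_div, mul_div_cancel₀ _ hz.ne']
    refine ⟨⟨⟨?_, hfst p hp hM⟩, hsnd p hp hM, ?_⟩, ?_⟩
    · rw [hp1]
      gcongr
      exacts [hsnd p hp hM, hupp p hp hM]
    · rw [hp2]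
      gcongr
      exacts [hfst p hp hM, hupp p hp hM]
    · change p.1 * exp δ ≤ p.2
      rw [hp2]
      exact mul_le_mul_of_nonneg_left (exp_le_exp.2 (hlow p hp hM)) hp.1.le

theorem exists_isMinOn_costRatio (hk1 : 0 < k1) (ha : 0 < a) (hb : 0 < b) (hc : 0 < c)
    (hη : 0 < η) (hβ : β < 0) :
    ∃ p ∈ orderedPosPairs,
      IsMinOn (fun p : ℝ × ℝ => costRatio k1 a b c η β p.1 p.2) orderedPosPairs p := by
  have h12 : ((1 : ℝ), (2 : ℝ)) ∈ orderedPosPairs := ⟨one_pos, one_lt_two⟩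
  obtain ⟨K, hKD, hK, hsub⟩ :=
    exists_isCompact_sublevel_costRatio hk1 ha hb hc hη hβ (costRatio k1 a b c η β 1 2)
  exact (continuousOn_costRatio hc.ne').exists_isMinOn_of_sublevel_subset h12 hK hKD hsub

theorem gbm_F_boundary_blowup_and_min_general (μ σ k1 k2 k4 β η : ℝ)
    (hμ : 0 < μ) (hk1 : 0 < k1) (hk2 : 0 < k2) (hk4 : 0 < k4)
    (hβ : β < 0) (hη0 : 0 < η)
    (ρ : ℝ) (hρpos : 0 < ρ)
    (F : ℝ → ℝ → ℝ)
    (hF : ∀ y z : ℝ, 0 < y → y < z →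
      F y z = (k1 + k2 * (z ^ η - y ^ η) - k4 / ρ * (z ^ β - y ^ β)) /
        (2 / (2 * μ + σ ^ 2) * (Real.log z - Real.log y)))
    (D : Set (ℝ × ℝ)) (hD : D = {p : ℝ × ℝ | 0 < p.1 ∧ p.1 < p.2}) :
    (∀ xbar > (0 : ℝ),
      Tendsto (fun p : ℝ × ℝ => F p.1 p.2) (nhds (xbar, xbar) ⊓ 𝓟 D) atTop) ∧
    (∀ y > (0 : ℝ), Tendsto (fun z => F y z) atTop atTop) ∧
    Tendsto (fun p : ℝ × ℝ => F p.1 p.2) ((atTop ×ˢ atTop) ⊓ 𝓟 D) atTop ∧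
    (∀ z > (0 : ℝ), Tendsto (fun y => F y z) (nhdsWithin 0 (Ioi 0)) atTop) ∧
    Tendsto (fun p : ℝ × ℝ => F p.1 p.2)
      ((nhdsWithin 0 (Ioi 0) ×ˢ atTop) ⊓ 𝓟 D) atTop ∧
    Tendsto (fun p : ℝ × ℝ => F p.1 p.2) (nhds ((0 : ℝ), (0 : ℝ)) ⊓ 𝓟 D) atTop ∧
    ∃ ystar zstar : ℝ, 0 < ystar ∧ ystar < zstar ∧
      ∀ y z : ℝ, 0 < y → y < z → F ystar zstar ≤ F y z := by
  obtain rfl : D = orderedPosPairs := hD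
  have hb : 0 < k4 / ρ := div_pos hk4 hρpos
  have hc : 0 < 2 / (2 * μ + σ ^ 2) := by positivity
  have onD (l : Filter (ℝ × ℝ))
      (h : Tendsto (fun p : ℝ × ℝ => costRatio k1 k2 (k4 / ρ) _ η β p.1 p.2) (l ⊓ 𝓟 _) atTop) :
      Tendsto (fun p : ℝ × ℝ => F p.1 p.2) (l ⊓ 𝓟 orderedPosPairs) atTop :=
    h.congr' <| (eventually_mem_orderedPosPairs l).mono fun p hp => (hF p.1 p.2 hp.1 hp.2).symm
  obtain ⟨⟨ystar, zstar⟩, ⟨hy, hyz⟩, hmin⟩ := exists_isMinOn_costRatio hk1 hk2 hb hc hη0 hβ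
  refine ⟨fun x hx => onD _ (tendsto_costRatio_nhds_diag hk1 hk2.le hb.le hc hη0.le hβ.le hx),
    fun y hy => ?_, onD _ (tendsto_costRatio_atTop_atTop hk1.le hk2 hb.le hc hη0 hβ.le),
    fun z hz => ?_, onD _ (tendsto_costRatio_nhdsGT_zero_atTop hk1.le hk2 hb hc hη0 hβ),
    onD _ (tendsto_costRatio_nhds_zero_zero hk1.le hk2.le hb hc hη0.le hβ),
    ystar, zstar, hy, hyz, fun y z hy' hyz' => ?_⟩
  · refine (tendsto_costRatio_atTop_right hk1.le hk2 hb hc hη0 hβ hy).congr' ?_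
    filter_upwards [eventually_gt_atTop y] with z hz
    exact (hF y z hy hz).symm
  · refine (tendsto_costRatio_nhdsGT_zero_left hk1.le hk2 hb hc hη0 hβ hz).congr' ?_
    filter_upwards [Ioo_mem_nhdsGT hz] with y hy
    exact (hF y z hy.1 hy.2).symm
  · rw [hF _ _ hy hyz, hF _ _ hy' hyz']
    exact hmin (show (y, z) ∈ orderedPosPairs from ⟨hy', hyz'⟩)

/-- In the GBM model with `k3 = 0`, `F(y,z)` blows up at every part of the
boundary of `{0 < y < z}` and hence attains its minimum at an interior pair. -/
theorem gbm_F_boundary_blowup_and_min (μ σ k1 k2 k4 β η : ℝ)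
    (hμ : 0 < μ) (hσ : 0 < σ) (hk1 : 0 < k1) (hk2 : 0 < k2) (hk4 : 0 < k4)
    (hβ : β < 0) (hη0 : 0 < η) (hη1 : η ≤ 1)
    (ρ : ℝ) (hρ : ρ = σ ^ 2 / 2 * β ^ 2 - (μ + σ ^ 2 / 2) * β) (hρpos : 0 < ρ)
    (F : ℝ → ℝ → ℝ)
    (hF : ∀ y z : ℝ, 0 < y → y < z →
      F y z = (k1 + k2 * (z ^ η - y ^ η) - k4 / ρ * (z ^ β - y ^ β)) /
        (2 / (2 * μ + σ ^ 2) * (Real.log z - Real.log y)))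
    (D : Set (ℝ × ℝ)) (hD : D = {p : ℝ × ℝ | 0 < p.1 ∧ p.1 < p.2}) :
    (∀ xbar > (0 : ℝ),
      Tendsto (fun p : ℝ × ℝ => F p.1 p.2) (nhds (xbar, xbar) ⊓ 𝓟 D) atTop) ∧
    (∀ y > (0 : ℝ), Tendsto (fun z => F y z) atTop atTop) ∧
    Tendsto (fun p : ℝ × ℝ => F p.1 p.2) ((atTop ×ˢ atTop) ⊓ 𝓟 D) atTop ∧
    (∀ z > (0 : ℝ), Tendsto (fun y => F y z) (nhdsWithin 0 (Ioi 0)) atTop) ∧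
    Tendsto (fun p : ℝ × ℝ => F p.1 p.2)
      ((nhdsWithin 0 (Ioi 0) ×ˢ atTop) ⊓ 𝓟 D) atTop ∧
    Tendsto (fun p : ℝ × ℝ => F p.1 p.2) (nhds ((0 : ℝ), (0 : ℝ)) ⊓ 𝓟 D) atTop ∧
    ∃ ystar zstar : ℝ, 0 < ystar ∧ ystar < zstar ∧
      ∀ y z : ℝ, 0 < y → y < z → F ystar zstar ≤ F y z :=
  gbm_F_boundary_blowup_and_min_general μ σ k1 k2 k4 β η hμ hk1 hk2 hk4 hβ hη0 ρ hρpos F hF D hD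
end
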